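/- Assume β̃ > 0 and let δ ∈ (0,1] satisfy (max_{1≤i≤m} γ_i/μ_i - 1)⁺ δ ≤ 1. Then for every p > 1: (i) for every x ∈ K₋ and u ∈ Δ, ⟨b̃(x,u), ∇𝒱_{p,δ}(x)⟩ ≤ p δ (δ β̃ + (m/(2δ))(1 + δ²) - δ ‖x‖₁) 𝒱_{p-1,δ}(x); and (ii) for every x ∈ K₊ and u ∈ Δ, ⟨b̃(x,u), ∇𝒱_{p,δ}(x)⟩ ≤ -p δ (β̃/m - δ β̃ - δ m/2 + δ ‖x⁻‖₁) 𝒱_{p-1,δ}(x), where ‖x‖₁ = ∑_i |x_i| and ‖x⁻‖₁ = ∑_i max(-x_i,0). -/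

import Mathlib

open scoped BigOperators
open MeasureTheory

noncomputable section

/-- The piecewise function `ψ` from Definition 1 of the paper. -/
def psi (t : ℝ) : ℝ :=
  if t ≤ -1 then -(1/2)
  else if t ≤ 0 then (t+1)^3 - (1/2)*(t+1)^4 - 1/2
  else t

/-- `Ψ(x) = ∑ i, ψ(x_i)/μ_i`. -/
def Psi (m : ℕ) (μ : Fin m → ℝ) (x : Fin m → ℝ) : ℝ := ∑ i, psi (x i) / μ i

/-- `Ψ_δ(x) = ∑ i, ψ(δ x_i)/μ_i`. -/
def Psid (m : ℕ) (μ : Fin m → ℝ) (δ : ℝ) (x : Fin m → ℝ) : ℝ :=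
  ∑ i, psi (δ * x i) / μ i

/-- The scaled Lyapunov function
`𝒱_{p,δ}(x) = (δ² Ψ(-x) + Ψ_δ(x) + m / min_i μ_i)^p`. -/
def Vpd (m : ℕ) (μ : Fin m → ℝ) (δ p : ℝ) (x : Fin m → ℝ) : ℝ :=
  (δ ^ 2 * Psi m μ (-x) + Psid m μ δ x + (m : ℝ) / ⨅ i, μ i) ^ p

/-- The drift `b̃(x,u) = -(β̃/m) M e - M (x - ⟨e,x⟩⁺ u) - ⟨e,x⟩⁺ Γ u`, written
componentwise, where `M = diag(μ)` and `Γ = diag(γ)`. -/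
def drift (m : ℕ) (μ γ : Fin m → ℝ) (β : ℝ) (x u : Fin m → ℝ) : Fin m → ℝ :=
  fun i => -(β / (m : ℝ)) * μ i - μ i * (x i - max (∑ j, x j) 0 * u i)
    - max (∑ j, x j) 0 * (γ i * u i)

/-- `trace(A ∇²f(x)) = ∑ i j, A_{ij} ∂_i ∂_j f(x)`. -/
def traceHess (m : ℕ) (A : Matrix (Fin m) (Fin m) ℝ) (f : (Fin m → ℝ) → ℝ)
    (x : Fin m → ℝ) : ℝ :=
  ∑ i, ∑ j, A i j *
    fderiv ℝ (fun y => fderiv ℝ f y (Pi.single i (1 : ℝ))) x (Pi.single j (1 : ℝ))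

/-!
Write `g(t) = δ ψ'(δ t) - δ² ψ'(-t)` for the derivative of `t ↦ δ² ψ(-t) + ψ(δ t)`. Since each
such term is `≥ -1/2`, the base `𝒱_{1,δ}` is at least `m / (2 min μ) > 0`, and the chain rule gives
`⟨b̃(x,u), ∇𝒱_{p,δ}(x)⟩ = p 𝒱_{p-1,δ}(x) ∑ᵢ g(xᵢ) b̃ᵢ / μᵢ` with
`b̃ᵢ / μᵢ = -β̃/m - xᵢ + ⟨e,x⟩⁺ (1 - γᵢ/μᵢ) uᵢ`. Both inequalities then come from coordinatewise bounds
on `g(t) (-β̃/m - t)` and `g(t) (1 - γᵢ/μᵢ)`, which only use `0 ≤ ψ' ≤ 1`, `ψ' = 1` on `[0, ∞)`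
and `-t ψ'(t) ≤ 1/2` on `(-∞, 0]`. On `K₊` some coordinate is positive, and it alone contributes
the extra `-δ β̃/m`.
-/

open Set Filter Topology

theorem HasDerivAt.of_nhdsLE_of_nhdsGE {f g h : ℝ → ℝ} {f' a : ℝ}
    (hg : HasDerivAt g f' a) (hh : HasDerivAt h f' a)
    (hfg : f =ᶠ[𝓝[≤] a] g) (hfh : f =ᶠ[𝓝[≥] a] h) : HasDerivAt f f' a := by
  have := (hg.hasDerivWithinAt.congr_of_eventuallyEq hfg
    (hfg.eq_of_nhdsWithin self_mem_Iic)).union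
    (hh.hasDerivWithinAt.congr_of_eventuallyEq hfh (hfh.eq_of_nhdsWithin self_mem_Ici))
  rwa [Iic_union_Ici, hasDerivWithinAt_univ] at this

theorem hasFDerivAt_sum_apply {ι : Type*} [Fintype ι] {f : ι → ℝ → ℝ} {f' : ι → ℝ}
    {x : ι → ℝ} (hf : ∀ i, HasDerivAt (f i) (f' i) (x i)) :
    HasFDerivAt (fun y => ∑ i, f i (y i))
      (∑ i, f' i • (ContinuousLinearMap.proj i : (ι → ℝ) →L[ℝ] ℝ)) x :=
  HasFDerivAt.fun_sum fun i _ =>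
    (hf i).comp_hasFDerivAt x (ContinuousLinearMap.proj (R := ℝ) (φ := fun _ : ι => ℝ) i).hasFDerivAt

def psi' (t : ℝ) : ℝ :=
  if t ≤ -1 then 0 else if t ≤ 0 then 3 * (t + 1) ^ 2 - 2 * (t + 1) ^ 3 else 1

lemma psi_eqOn_Iic : EqOn psi (fun _ => -(1 / 2)) (Iic (-1)) := fun _ ht => if_pos ht

lemma psi_eqOn_Icc :
    EqOn psi (fun t => (t + 1) ^ 3 - (1 / 2) * (t + 1) ^ 4 - 1 / 2) (Icc (-1) 0) := by
  rintro t ⟨h1, h0⟩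
  rcases h1.eq_or_lt with rfl | h1
  · norm_num [psi]
  · simp [psi, not_le.mpr h1, h0]

lemma psi_eqOn_Ici : EqOn psi id (Ici 0) := by
  rintro t (ht : 0 ≤ t)
  rcases ht.eq_or_lt with rfl | ht
  · norm_num [psi]
  · simp [psi, ht, show ¬ t ≤ -1 by linarith]

lemma psi_of_nonneg {t : ℝ} (ht : 0 ≤ t) : psi t = t := psi_eqOn_Ici ht

lemma hasDerivAt_psi_cubic (t : ℝ) :
    HasDerivAt (fun s => (s + 1) ^ 3 - (1 / 2) * (s + 1) ^ 4 - 1 / 2)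
      (3 * (t + 1) ^ 2 - 2 * (t + 1) ^ 3) t := by
  have h := (hasDerivAt_id t).add_const 1
  exact (((h.pow 3).sub ((h.pow 4).const_mul (1 / 2))).sub_const (1 / 2)).congr_deriv
    (by simp; ring)

lemma hasDerivAt_psi (t : ℝ) : HasDerivAt psi (psi' t) t := by
  have hconst := hasDerivAt_const t (-(1 / 2) : ℝ)
  have hcubic := hasDerivAt_psi_cubic t
  have hid := hasDerivAt_id t
  rcases lt_trichotomy t (-1) with ht | rfl | ht
  · rw [show psi' t = 0 from if_pos ht.le]
    exact hconst.congr_of_eventuallyEq (eventuallyEq_of_mem (Iic_mem_nhds ht) psi_eqOn_Iic)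
  · rw [show psi' (-1) = 0 by norm_num [psi']]
    exact hconst.of_nhdsLE_of_nhdsGE (hcubic.congr_deriv (by norm_num))
      (eventuallyEq_of_mem self_mem_nhdsWithin psi_eqOn_Iic)
      (eventuallyEq_of_mem (Icc_mem_nhdsGE (by norm_num)) psi_eqOn_Icc)
  rcases lt_trichotomy t 0 with ht0 | rfl | ht0
  · rw [show psi' t = 3 * (t + 1) ^ 2 - 2 * (t + 1) ^ 3 by simp [psi', not_le.mpr ht, ht0.le]]
    exact hcubic.congr_of_eventuallyEq (eventuallyEq_of_mem (Icc_mem_nhds ht ht0) psi_eqOn_Icc)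
  · rw [show psi' 0 = 1 by norm_num [psi']]
    exact (hcubic.congr_deriv (by norm_num)).of_nhdsLE_of_nhdsGE hid
      (eventuallyEq_of_mem (Icc_mem_nhdsLE (by norm_num)) psi_eqOn_Icc)
      (eventuallyEq_of_mem self_mem_nhdsWithin psi_eqOn_Ici)
  · rw [show psi' t = 1 by simp [psi', not_le.mpr ht, not_le.mpr ht0]]
    exact hid.congr_of_eventuallyEq (eventuallyEq_of_mem (Ici_mem_nhds ht0) psi_eqOn_Ici)

lemma neg_half_le_psi (t : ℝ) : -(1 / 2) ≤ psi t := by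
  unfold psi
  split_ifs with h1 h2
  · rfl
  · nlinarith [pow_nonneg (by linarith : (0:ℝ) ≤ t + 1) 3, sq_nonneg (t + 1)]
  · linarith

lemma psi'_nonneg (t : ℝ) : 0 ≤ psi' t := by
  unfold psi'
  split_ifs with h1 h2
  · rfl
  · nlinarith [mul_nonneg (sq_nonneg (t + 1)) (show (0:ℝ) ≤ 1 - 2 * t by linarith)]
  · norm_num

lemma psi'_le_one (t : ℝ) : psi' t ≤ 1 := by
  unfold psi'
  split_ifs with h1 h2
  · norm_num
  · nlinarith [mul_nonneg (mul_nonneg (sq_nonneg t) (show (0:ℝ) ≤ t + 1 by linarith))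
      (show (0:ℝ) ≤ t + 1 by linarith), mul_nonneg (sq_nonneg t) (show (0:ℝ) ≤ t + 1 by linarith)]
  · rfl

lemma psi'_of_nonneg {t : ℝ} (ht : 0 ≤ t) : psi' t = 1 := by
  unfold psi'
  split_ifs with h1 h2
  · linarith
  · norm_num [le_antisymm h2 ht]
  · rfl

lemma neg_mul_psi'_le_half {t : ℝ} (ht : t ≤ 0) : -t * psi' t ≤ 1 / 2 := by
  unfold psi'
  split_ifs with h1
  · linarith
  · nlinarith [sq_nonneg (t + 1), not_le.mp h1, sq_nonneg ((t + 1) ^ 2 - 1 / 2),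
      mul_nonneg (sq_nonneg (t + 1)) (neg_nonneg.mpr ht)]

def lyapTerm (δ t : ℝ) : ℝ := δ ^ 2 * psi (-t) + psi (δ * t)

def lyapTerm' (δ t : ℝ) : ℝ := δ * psi' (δ * t) - δ ^ 2 * psi' (-t)

lemma hasDerivAt_lyapTerm (δ t : ℝ) : HasDerivAt (lyapTerm δ) (lyapTerm' δ t) t := by
  have h1 := ((hasDerivAt_psi (-t)).comp t (hasDerivAt_neg t)).const_mul (δ ^ 2)
  have h2 := (hasDerivAt_psi (δ * t)).comp t ((hasDerivAt_id t).const_mul δ)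
  exact (h1.add h2).congr_deriv (by simp only [lyapTerm']; ring)

lemma neg_half_le_lyapTerm {δ : ℝ} (hδ0 : 0 ≤ δ) (hδ1 : δ ≤ 1) (t : ℝ) :
    -(1 / 2) ≤ lyapTerm δ t := by
  unfold lyapTerm
  rcases le_total 0 t with ht | ht
  · rw [psi_of_nonneg (mul_nonneg hδ0 ht)]
    nlinarith [neg_half_le_psi (-t), mul_nonneg hδ0 ht]
  · rw [psi_of_nonneg (neg_nonneg.mpr ht)]
    nlinarith [neg_half_le_psi (δ * t), sq_nonneg δ]

def lyapBase (m : ℕ) (μ : Fin m → ℝ) (δ : ℝ) (x : Fin m → ℝ) : ℝ :=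
  ∑ i, lyapTerm δ (x i) / μ i + m / ⨅ i, μ i

lemma Vpd_eq (m : ℕ) (μ : Fin m → ℝ) (δ p : ℝ) :
    Vpd m μ δ p = fun x => lyapBase m μ δ x ^ p := by
  funext x
  simp only [Vpd, Psi, Psid, lyapBase, lyapTerm, Finset.mul_sum, ← Finset.sum_add_distrib,
    Pi.neg_apply]
  congr 3
  funext i
  ring

lemma lyapBase_pos {m : ℕ} (hm : 0 < m) {μ : Fin m → ℝ} (hμ : ∀ i, 0 < μ i) {δ : ℝ}
    (hδ0 : 0 ≤ δ) (hδ1 : δ ≤ 1) (x : Fin m → ℝ) : 0 < lyapBase m μ δ x := by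
  have : Nonempty (Fin m) := ⟨⟨0, hm⟩⟩
  obtain ⟨i₀, hi₀⟩ := exists_eq_ciInf_of_finite (f := μ)
  set μ₀ := ⨅ i, μ i
  have hμ₀ : 0 < μ₀ := hi₀ ▸ hμ i₀
  have hterm : ∀ i, -(1 / 2) / μ₀ ≤ lyapTerm δ (x i) / μ i := fun i => calc
    -(1 / 2) / μ₀ ≤ -(1 / 2) / μ i := by
      rw [neg_div, neg_div, neg_le_neg_iff]
      exact div_le_div_of_nonneg_left (by norm_num) hμ₀ (ciInf_le (finite_range μ).bddBelow i)
    _ ≤ lyapTerm δ (x i) / μ i :=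
      div_le_div_of_nonneg_right (neg_half_le_lyapTerm hδ0 hδ1 _) (hμ i).le
  have hsum := Finset.sum_le_sum fun i (_ : i ∈ Finset.univ) => hterm i
  simp only [Finset.sum_const, Finset.card_univ, Fintype.card_fin, nsmul_eq_mul] at hsum
  have : 0 < (m : ℝ) / μ₀ := by positivity
  unfold lyapBase
  linarith [show (m : ℝ) * (-(1 / 2) / μ₀) = -(1 / 2) * (m / μ₀) by ring]

lemma hasFDerivAt_lyapBase (m : ℕ) (μ : Fin m → ℝ) (δ : ℝ) (x : Fin m → ℝ) :
    HasFDerivAt (lyapBase m μ δ)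
      (∑ i, (lyapTerm' δ (x i) / μ i) • (ContinuousLinearMap.proj i : (Fin m → ℝ) →L[ℝ] ℝ)) x :=
  (hasFDerivAt_sum_apply fun i => (hasDerivAt_lyapTerm δ (x i)).div_const (μ i)).add_const _

lemma fderiv_Vpd_apply {m : ℕ} {μ : Fin m → ℝ} {δ : ℝ} (p : ℝ) {x : Fin m → ℝ}
    (hx : 0 < lyapBase m μ δ x) (b : Fin m → ℝ) :
    fderiv ℝ (Vpd m μ δ p) x b
      = p * Vpd m μ δ (p - 1) x * ∑ i, lyapTerm' δ (x i) * (b i / μ i) := by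
  rw [Vpd_eq, Vpd_eq, ((hasFDerivAt_lyapBase m μ δ x).rpow_const (Or.inl hx.ne')).fderiv]
  simp only [FunLike.coe_smul, FunLike.coe_sum, Pi.smul_apply,
    Finset.sum_apply,
    ContinuousLinearMap.proj_apply, smul_eq_mul]
  congr 1
  exact Finset.sum_congr rfl fun i _ => by ring

lemma fderiv_Vpd_apply_le {m : ℕ} (hm : 0 < m) {μ : Fin m → ℝ} (hμ : ∀ i, 0 < μ i) {δ p : ℝ}
    (hδ0 : 0 ≤ δ) (hδ1 : δ ≤ 1) (hp : 0 ≤ p) {x b : Fin m → ℝ} {B : ℝ}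
    (h : ∑ i, lyapTerm' δ (x i) * (b i / μ i) ≤ B) :
    fderiv ℝ (Vpd m μ δ p) x b ≤ p * B * Vpd m μ δ (p - 1) x := by
  have hx := lyapBase_pos hm hμ hδ0 hδ1 x
  have hV : 0 ≤ Vpd m μ δ (p - 1) x := by rw [Vpd_eq]; exact Real.rpow_nonneg hx.le _
  rw [fderiv_Vpd_apply p hx, mul_right_comm p B]
  exact mul_le_mul_of_nonneg_left h (mul_nonneg hp hV)

section CoordinateBounds

variable {δ q t : ℝ}

lemma lyapTerm'_mul_le_of_nonneg (hδ : 0 ≤ δ) (hq : 0 ≤ q) (ht : 0 ≤ t) :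
    lyapTerm' δ t * (-q - t) ≤ δ ^ 2 * q + δ ^ 2 / 2 - δ * q - δ * t := by
  have hc := psi'_le_one (-t)
  have hkey : t * psi' (-t) ≤ 1 / 2 := by simpa using neg_mul_psi'_le_half (neg_nonpos.mpr ht)
  rw [lyapTerm', psi'_of_nonneg (mul_nonneg hδ ht)]
  nlinarith [mul_le_mul_of_nonneg_left (mul_le_of_le_one_left hq hc) (sq_nonneg δ),
    mul_le_mul_of_nonneg_left hkey (sq_nonneg δ)]

lemma lyapTerm'_mul_le_of_nonpos (hδ : 0 ≤ δ) (hq : 0 ≤ q) (ht : t ≤ 0) :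
    lyapTerm' δ t * (-q - t) ≤ δ ^ 2 * q - δ * t + δ ^ 2 * t := by
  have ha0 := psi'_nonneg (δ * t)
  have ha1 := psi'_le_one (δ * t)
  rw [lyapTerm', psi'_of_nonneg (neg_nonneg.mpr ht)]
  nlinarith [mul_nonneg (mul_nonneg hδ ha0) hq,
    mul_nonneg (mul_nonneg hδ (sub_nonneg.mpr ha1)) (neg_nonneg.mpr ht)]

lemma lyapTerm'_mul_le_half_of_nonpos (hδ : 0 ≤ δ) (hq : 0 ≤ q) (ht : t ≤ 0) :
    lyapTerm' δ t * (-q - t) ≤ δ ^ 2 * q + 1 / 2 + δ ^ 2 * t := by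
  have ha0 := psi'_nonneg (δ * t)
  have hkey := neg_mul_psi'_le_half (mul_nonpos_of_nonneg_of_nonpos hδ ht)
  rw [lyapTerm', psi'_of_nonneg (neg_nonneg.mpr ht)]
  nlinarith [mul_nonneg (mul_nonneg hδ ha0) hq]

lemma lyapTerm'_mul_le_abs (hδ0 : 0 ≤ δ) (hδ1 : δ ≤ 1) (hq : 0 ≤ q) :
    lyapTerm' δ t * (-q - t) ≤ δ ^ 2 * q + (1 + δ ^ 2) / 2 - δ ^ 2 * |t| := by
  rcases le_total 0 t with ht | ht
  · rw [abs_of_nonneg ht]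
    nlinarith [lyapTerm'_mul_le_of_nonneg hδ0 hq ht, mul_nonneg hδ0 hq,
      mul_nonneg (mul_nonneg hδ0 ht) (sub_nonneg.mpr hδ1)]
  · rw [abs_of_nonpos ht]
    linarith [lyapTerm'_mul_le_half_of_nonpos hδ0 hq ht, sq_nonneg δ]

lemma lyapTerm'_mul_le_negPart (hδ : 0 ≤ δ) (hq : 0 ≤ q) :
    lyapTerm' δ t * (-q - t) ≤
      δ ^ 2 * q + δ ^ 2 / 2 - δ ^ 2 * max (-t) 0 - δ * t - if 0 ≤ t then δ * q else 0 := by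
  rcases le_or_gt 0 t with ht | ht
  · rw [if_pos ht, max_eq_right (neg_nonpos.mpr ht)]
    linarith [lyapTerm'_mul_le_of_nonneg hδ hq ht]
  · rw [if_neg ht.not_ge, max_eq_left (neg_nonneg.mpr ht.le)]
    nlinarith [lyapTerm'_mul_le_of_nonpos hδ hq ht.le]

lemma lyapTerm'_mul_one_sub_le {r : ℝ} (hδ : 0 ≤ δ) (hr : 0 ≤ r) (hrδ : (r - 1) * δ ≤ 1) :
    lyapTerm' δ t * (1 - r) ≤ δ := by
  have ha0 := psi'_nonneg (δ * t)
  have ha1 := psi'_le_one (δ * t)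
  have hc0 := psi'_nonneg (-t)
  have hc1 := psi'_le_one (-t)
  unfold lyapTerm'
  rcases le_total r 1 with h | h
  · nlinarith [mul_nonneg (mul_nonneg hδ (sub_nonneg.mpr ha1)) (sub_nonneg.mpr h),
      mul_nonneg (mul_nonneg (sq_nonneg δ) hc0) (sub_nonneg.mpr h), mul_nonneg hδ hr,
      mul_nonneg (mul_nonneg hδ ha0) hr]
  · nlinarith [mul_nonneg (mul_nonneg hδ ha0) (sub_nonneg.mpr h),
      mul_nonneg (mul_nonneg hδ hc0) (sub_nonneg.mpr hrδ),
      mul_nonneg hδ (sub_nonneg.mpr hc1)]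

end CoordinateBounds

lemma drift_div {m : ℕ} {μ : Fin m → ℝ} (γ : Fin m → ℝ) (β : ℝ) (x u : Fin m → ℝ) {i : Fin m}
    (hμ : μ i ≠ 0) :
    drift m μ γ β x u i / μ i
      = -(β / m) - x i + max (∑ j, x j) 0 * (1 - γ i / μ i) * u i := by
  unfold drift
  field_simp
  ring

section DriftBounds

variable {m : ℕ} {μ : Fin m → ℝ} (γ : Fin m → ℝ) {β δ : ℝ} {x : Fin m → ℝ} (u : Fin m → ℝ)

lemma sum_lyapTerm'_mul_drift_le_of_sum_nonpos (hm : 0 < m) (hμ : ∀ i, 0 < μ i)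
    (hβ : 0 ≤ β) (hδ0 : 0 < δ) (hδ1 : δ ≤ 1) (hx : ∑ i, x i ≤ 0) :
    ∑ i, lyapTerm' δ (x i) * (drift m μ γ β x u i / μ i)
      ≤ δ * (δ * β + m / (2 * δ) * (1 + δ ^ 2) - δ * ∑ i, |x i|) := by
  have hq : 0 ≤ β / m := by positivity
  calc ∑ i, lyapTerm' δ (x i) * (drift m μ γ β x u i / μ i)
      ≤ ∑ i, (δ ^ 2 * (β / m) + (1 + δ ^ 2) / 2 - δ ^ 2 * |x i|) := by
        refine Finset.sum_le_sum fun i _ => ?_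
        rw [drift_div γ β x u (hμ i).ne', max_eq_right hx, zero_mul, zero_mul, add_zero]
        exact lyapTerm'_mul_le_abs hδ0.le hδ1 hq
    _ = δ * (δ * β + m / (2 * δ) * (1 + δ ^ 2) - δ * ∑ i, |x i|) := by
        simp only [Finset.sum_sub_distrib, Finset.sum_const, Finset.card_univ, Fintype.card_fin,
          nsmul_eq_mul, ← Finset.mul_sum]
        field_simp

lemma sum_lyapTerm'_mul_drift_le_of_sum_pos (hm : 0 < m) (hμ : ∀ i, 0 < μ i)
    (hγ : ∀ i, 0 ≤ γ i) (hγδ : ∀ i, (γ i / μ i - 1) * δ ≤ 1) (hβ : 0 ≤ β) (hδ : 0 ≤ δ)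
    (hx : 0 < ∑ i, x i) (hu : ∀ i, 0 ≤ u i) (hu1 : ∑ i, u i = 1) :
    ∑ i, lyapTerm' δ (x i) * (drift m μ γ β x u i / μ i)
      ≤ -(δ * (β / m - δ * β - δ * m / 2 + δ * ∑ i, max (-(x i)) 0)) := by
  set s := ∑ i, x i
  set q := β / m
  have hq : 0 ≤ q := by positivity
  have hcoord : ∀ i, lyapTerm' δ (x i) * (drift m μ γ β x u i / μ i)
      ≤ δ ^ 2 * q + δ ^ 2 / 2 - δ ^ 2 * max (-(x i)) 0 - δ * x i
        - (if 0 ≤ x i then δ * q else 0) + δ * (s * u i) := by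
    intro i
    have hsu : 0 ≤ s * u i := mul_nonneg hx.le (hu i)
    rw [drift_div γ β x u (hμ i).ne', max_eq_left hx.le]
    calc lyapTerm' δ (x i) * (-q - x i + s * (1 - γ i / μ i) * u i)
        = lyapTerm' δ (x i) * (-q - x i) + lyapTerm' δ (x i) * (1 - γ i / μ i) * (s * u i) := by
          ring
      _ ≤ _ := add_le_add (lyapTerm'_mul_le_negPart hδ hq)
          (mul_le_mul_of_nonneg_right
            (lyapTerm'_mul_one_sub_le hδ (div_nonneg (hγ i) (hμ i).le) (hγδ i)) hsu)
  obtain ⟨i₀, -, hi₀⟩ := Finset.exists_lt_of_sum_lt (s := Finset.univ) (f := 0) (g := x)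
    (by simpa using hx)
  have hpos : δ * q ≤ ∑ i, if 0 ≤ x i then δ * q else 0 := by
    have := Finset.single_le_sum (f := fun i => if 0 ≤ x i then δ * q else 0)
      (fun i _ => by positivity) (Finset.mem_univ i₀)
    rwa [if_pos (le_of_lt (by simpa using hi₀))] at this
  calc ∑ i, lyapTerm' δ (x i) * (drift m μ γ β x u i / μ i)
      ≤ ∑ i, (δ ^ 2 * q + δ ^ 2 / 2 - δ ^ 2 * max (-(x i)) 0 - δ * x i
        - (if 0 ≤ x i then δ * q else 0) + δ * (s * u i)) := Finset.sum_le_sum fun i _ => hcoord i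
    _ = m * (δ ^ 2 * q + δ ^ 2 / 2) - δ ^ 2 * ∑ i, max (-(x i)) 0
          - ∑ i, (if 0 ≤ x i then δ * q else 0) := by
        simp only [Finset.sum_add_distrib, Finset.sum_sub_distrib, Finset.sum_const,
          Finset.card_univ, Fintype.card_fin, nsmul_eq_mul, ← Finset.mul_sum, hu1]
        ring
    _ ≤ -(δ * (β / m - δ * β - δ * m / 2 + δ * ∑ i, max (-(x i)) 0)) := by
        have hmq : (m : ℝ) * q = β := by simp only [q]; field_simp
        nlinarith [hpos]

end DriftBounds

/-- Drift inequalities for `𝒱_{p,δ}`: assume `β̃ > 0` and `δ ∈ (0,1]` with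
`(max_i γ_i/μ_i - 1)⁺ δ ≤ 1`. Then for every `p > 1`:
(i) on `K₋`, `⟨b̃(x,u), ∇𝒱_{p,δ}(x)⟩ ≤ pδ(δβ̃ + (m/(2δ))(1+δ²) - δ‖x‖₁) 𝒱_{p-1,δ}(x)`;
(ii) on `K₊`, `⟨b̃(x,u), ∇𝒱_{p,δ}(x)⟩ ≤ -pδ(β̃/m - δβ̃ - δm/2 + δ‖x⁻‖₁) 𝒱_{p-1,δ}(x)`. -/
theorem stmt_13 (m : ℕ) (hm : 1 ≤ m) (μ γ : Fin m → ℝ)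
    (hμ : ∀ i, 0 < μ i) (hγ : ∀ i, 0 ≤ γ i)
    (βt : ℝ) (hβ : 0 < βt)
    (δ : ℝ) (hδ0 : 0 < δ) (hδ1 : δ ≤ 1)
    (hδγ : max ((⨆ i, γ i / μ i) - 1) 0 * δ ≤ 1)
    (p : ℝ) (hp : 1 < p) :
    (∀ x u : Fin m → ℝ, ∑ i, x i ≤ 0 → (∀ i, 0 ≤ u i) → ∑ i, u i = 1 →
      fderiv ℝ (Vpd m μ δ p) x (drift m μ γ βt x u) ≤
        p * δ * (δ * βt + (m : ℝ) / (2 * δ) * (1 + δ ^ 2) - δ * ∑ i, |x i|)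
          * Vpd m μ δ (p - 1) x) ∧
    (∀ x u : Fin m → ℝ, 0 < ∑ i, x i → (∀ i, 0 ≤ u i) → ∑ i, u i = 1 →
      fderiv ℝ (Vpd m μ δ p) x (drift m μ γ βt x u) ≤
        -(p * δ * (βt / (m : ℝ) - δ * βt - δ * (m : ℝ) / 2 + δ * ∑ i, max (-(x i)) 0)
          * Vpd m μ δ (p - 1) x)) := by
  have hγδ : ∀ i, (γ i / μ i - 1) * δ ≤ 1 := fun i =>
    (mul_le_mul_of_nonneg_right (le_max_of_le_left (sub_le_sub_right
      (le_ciSup (finite_range fun j => γ j / μ j).bddAbove i) 1)) hδ0.le).trans hδγ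
  refine ⟨fun x u hx _ _ => ?_, fun x u hx hu hu1 => ?_⟩
  · exact (fderiv_Vpd_apply_le hm hμ hδ0.le hδ1 (by linarith)
      (sum_lyapTerm'_mul_drift_le_of_sum_nonpos γ u hm hμ hβ.le hδ0 hδ1 hx)).trans_eq (by ring)
  · exact (fderiv_Vpd_apply_le hm hμ hδ0.le hδ1 (by linarith)
      (sum_lyapTerm'_mul_drift_le_of_sum_pos γ u hm hμ hγ hγδ hβ.le hδ0.le hx hu hu1)).trans_eq
      (by ring)

end
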